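/- The polynomial y(x) = M_n(p,q,υ;x) satisfies the differential equation [x D (x D + q + 1 - υ)_υ − (−x)^υ (x D − υn)(x D + n + 1 − p)_υ] y = 0, where (x D + a)_υ denotes the composition of operators (x D + a)(x D + a + 1)···(x D + a + υ − 1) and D = d/dx. -/

import Mathlib

open Finset MeasureTheory Real Filter

/-- Pochhammer symbol `(a)_k = a (a+1) ⋯ (a+k-1)` for a real `a`. -/
noncomputable def poch (a : ℝ) (k : ℕ) : ℝ := ∏ i ∈ Finset.range k, (a + i)

/-- Generalized binomial coefficient `C(a, j)` for real `a`. -/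
noncomputable def rchoose (a : ℝ) (j : ℕ) : ℝ := (-1 : ℝ) ^ j * poch (-a) j / j.factorial

/-- The finite orthogonal polynomials `M_n^{(p,q)}(x)`. -/
noncomputable def Mfin (p q : ℝ) (n : ℕ) (x : ℝ) : ℝ :=
  (-1 : ℝ) ^ n * n.factorial *
    ∑ j ∈ Finset.range (n + 1), rchoose (p - n - 1) j * rchoose (q + n) (n - j) * (-x) ^ j

/-- The first set of finite biorthogonal polynomials `M_n(p,q,υ;x)`. -/
noncomputable def Mbio (p q : ℝ) (υ n : ℕ) (x : ℝ) : ℝ :=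
  (-1 : ℝ) ^ n * poch (q + 1) (υ * n) *
    ∑ j ∈ Finset.range (n + 1), (-1 : ℝ) ^ j * (n.choose j : ℝ) *
      (poch (n + 1 - p) (υ * j) / poch (q + 1) (υ * j)) * (-x) ^ (υ * j)

/-- The second set of finite biorthogonal polynomials `𝔐_n(p,q,υ;x)`. -/
noncomputable def Mfrak (p q : ℝ) (υ n : ℕ) (x : ℝ) : ℝ :=
  ∑ r ∈ Finset.range (n + 1), ∑ s ∈ Finset.range (r + 1),
    (-1 : ℝ) ^ (s + n) * (r.choose s : ℝ) * (poch (p + q - n) r / r.factorial) *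
      poch ((s + q + 1) / υ) n * x ^ r * (1 + x) ^ (n - r)

/-- The operator `x D + a` acting on functions. -/
noncomputable def eulerShift (a : ℝ) (f : ℝ → ℝ) : ℝ → ℝ := fun x => x * deriv f x + a * f x

/-- The operator `(x D + a)(x D + a + 1) ⋯ (x D + a + υ - 1)`. -/
noncomputable def pochOp : ℝ → ℕ → (ℝ → ℝ) → (ℝ → ℝ)
  | _, 0, f => f
  | a, k + 1, f => eulerShift a (pochOp (a + 1) k f)

lemma poch_add (a : ℝ) (m k : ℕ) : poch a (m + k) = poch a m * poch (a + m) k := by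
  simp only [poch, Finset.prod_range_add]
  congr 1
  exact Finset.prod_congr rfl fun i _ => by push_cast; ring

lemma poch_succ' (a : ℝ) (k : ℕ) : poch a (k + 1) = a * poch (a + 1) k := by
  rw [show k + 1 = 1 + k by ring, poch_add]; simp [poch]

lemma poch_ne_zero_of_le {a : ℝ} {m k : ℕ} (h : poch a m ≠ 0) (hk : k ≤ m) : poch a k ≠ 0 := by
  rw [show m = k + (m - k) by omega, poch_add] at h
  exact left_ne_zero_of_mul h

lemma deriv_monomial_sum (s : Finset ℕ) (c : ℕ → ℝ) (m : ℕ → ℕ) (x : ℝ) :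
    x * deriv (fun x => ∑ j ∈ s, c j * x ^ m j) x = ∑ j ∈ s, c j * (m j : ℝ) * x ^ m j := by
  rw [deriv_fun_sum (fun j _ => ((differentiable_pow (m j)).const_mul (c j)).differentiableAt)]
  rw [Finset.mul_sum]
  refine Finset.sum_congr rfl fun j _ => ?_
  rw [deriv_const_mul _ (differentiable_pow (m j)).differentiableAt, deriv_pow_field]
  cases' (m j) with k
  · simp
  · simp only [Nat.add_sub_cancel]; push_cast; ring

lemma eulerShift_sum (a : ℝ) (s : Finset ℕ) (c : ℕ → ℝ) (m : ℕ → ℕ) :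
    eulerShift a (fun x => ∑ j ∈ s, c j * x ^ m j)
      = fun x => ∑ j ∈ s, c j * (a + m j) * x ^ m j := by
  funext x
  simp only [eulerShift]
  rw [deriv_monomial_sum, Finset.mul_sum, ← Finset.sum_add_distrib]
  exact Finset.sum_congr rfl fun j _ => by ring

lemma pochOp_sum (k : ℕ) (a : ℝ) (s : Finset ℕ) (c : ℕ → ℝ) (m : ℕ → ℕ) :
    pochOp a k (fun x => ∑ j ∈ s, c j * x ^ m j)
      = fun x => ∑ j ∈ s, c j * poch (a + m j) k * x ^ m j := by
  induction k generalizing a with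
  | zero => simp [pochOp, poch]
  | succ k ih =>
    show eulerShift a (pochOp (a + 1) k _) = _
    rw [ih, eulerShift_sum]
    funext x
    refine Finset.sum_congr rfl fun j _ => ?_
    rw [poch_succ']
    ring_nf

noncomputable def bcoef (p q : ℝ) (υ n j : ℕ) : ℝ :=
  (-1:ℝ)^n * poch (q+1) (υ*n) * ((-1:ℝ)^j * (n.choose j : ℝ) *
    (poch (n+1-p) (υ*j) / poch (q+1) (υ*j)) * (-1:ℝ)^(υ*j))

lemma coeff_identity (p q : ℝ) (υ n j : ℕ) (hj : j < n) :
    bcoef p q υ n (j+1) * poch ((q+1-(υ:ℝ)) + (υ*(j+1) : ℕ)) υ * ((υ*(j+1) : ℕ) : ℝ)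
    = (-1:ℝ)^υ * (bcoef p q υ n j * poch (((n:ℝ)+1-p) + (υ*j : ℕ)) υ) *
        (((υ*j : ℕ) : ℝ) - (υ:ℝ)*(n:ℝ)) := by
  rcases eq_or_ne (poch (q+1) (υ*n)) 0 with h0 | h0
  · simp [bcoef, h0]
  · have hPq : poch (q+1) (υ*j) ≠ 0 := poch_ne_zero_of_le h0 (by nlinarith)
    have hPq1 : poch (q+1) (υ*(j+1)) ≠ 0 := poch_ne_zero_of_le h0 (by nlinarith)
    have hsplitq : poch (q+1) (υ*(j+1)) = poch (q+1) (υ*j) * poch ((q+1) + (υ*j : ℕ)) υ := by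
      rw [show υ*(j+1) = υ*j + υ by ring, poch_add]
    have hQ : poch ((q+1) + (υ*j : ℕ)) υ ≠ 0 := by
      intro h; rw [hsplitq, h, mul_zero] at hPq1; exact hPq1 rfl
    have hsplitn : poch ((n:ℝ)+1-p) (υ*(j+1))
        = poch ((n:ℝ)+1-p) (υ*j) * poch (((n:ℝ)+1-p) + (υ*j : ℕ)) υ := by
      rw [show υ*(j+1) = υ*j + υ by ring, poch_add]
    have key : poch ((n:ℝ)+1-p) (υ*(j+1)) / poch (q+1) (υ*(j+1)) * poch ((q+1) + (υ*j : ℕ)) υ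
        = poch ((n:ℝ)+1-p) (υ*j) / poch (q+1) (υ*j) * poch (((n:ℝ)+1-p) + (υ*j : ℕ)) υ := by
      rw [hsplitq, hsplitn, mul_div_mul_comm, mul_assoc, div_mul_cancel₀ _ hQ]
    have hq' : ((q+1-(υ:ℝ)) + ((υ*(j+1) : ℕ) : ℝ)) = (q+1) + ((υ*j : ℕ) : ℝ) := by
      push_cast; ring
    have hch : ((n.choose (j+1) : ℕ) : ℝ) * ((j:ℝ)+1) = (n.choose j : ℝ) * ((n:ℝ) - (j:ℝ)) := by
      have h2 : ((n.choose (j+1) * (j+1) : ℕ) : ℝ) = ((n.choose j * (n - j) : ℕ) : ℝ) := by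
        rw [Nat.choose_succ_right_eq n j]
      push_cast [Nat.cast_sub hj.le] at h2
      linarith
    have hpow : (-1:ℝ)^(υ*(j+1)) = (-1:ℝ)^(υ*j) * (-1:ℝ)^υ := by
      rw [show υ*(j+1) = υ*j + υ by ring, pow_add]
    simp only [bcoef, hq', hpow, pow_succ]
    push_cast at key ⊢
    set A := (-1:ℝ)^n * poch (q+1) (υ*n)
    set Rj := poch ((n:ℝ)+1-p) (υ*j) / poch (q+1) (υ*j)
    set N := poch (((n:ℝ)+1-p) + ((υ:ℝ)*(j:ℝ))) υ
    linear_combination (A * (-1:ℝ)^j * (-1) * (n.choose (j+1) : ℝ) * (-1:ℝ)^(υ*j) * (-1:ℝ)^υ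
        * ((υ:ℝ)*(j:ℝ)+(υ:ℝ))) * key
      + (-(A * (-1:ℝ)^j * (-1:ℝ)^(υ*j) * (-1:ℝ)^υ * Rj * N * (υ:ℝ))) * hch

lemma Mbio_eq (p q : ℝ) (υ n : ℕ) :
    Mbio p q υ n = fun x => ∑ j ∈ Finset.range (n+1), bcoef p q υ n j * x ^ (υ*j) := by
  funext x
  simp only [Mbio, bcoef, Finset.mul_sum]
  refine Finset.sum_congr rfl fun j _ => ?_
  rw [show (-x)^(υ*j) = (-1:ℝ)^(υ*j) * x^(υ*j) by rw [neg_pow]]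
  ring

theorem Mbio_differential_equation (p q : ℝ) (υ n : ℕ) (hυ : 0 < υ) (x : ℝ) :
    x * deriv (pochOp (q + 1 - υ) υ (Mbio p q υ n)) x -
      (-x) ^ υ * (x * deriv (pochOp (n + 1 - p) υ (Mbio p q υ n)) x -
        (υ : ℝ) * n * pochOp (n + 1 - p) υ (Mbio p q υ n) x) = 0 := by
  rw [Mbio_eq, pochOp_sum, pochOp_sum, deriv_monomial_sum, deriv_monomial_sum]
  simp only []
  have h2 : (-x)^υ * ((∑ j ∈ Finset.range (n+1),
        bcoef p q υ n j * poch (((n:ℝ)+1-p) + (υ*j : ℕ)) υ * ((υ*j : ℕ) : ℝ) * x ^ (υ*j)) -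
      (υ:ℝ) * (n:ℝ) * ∑ j ∈ Finset.range (n+1),
        bcoef p q υ n j * poch (((n:ℝ)+1-p) + (υ*j : ℕ)) υ * x ^ (υ*j))
      = ∑ j ∈ Finset.range (n+1), (-1:ℝ)^υ *
          (bcoef p q υ n j * poch (((n:ℝ)+1-p) + (υ*j : ℕ)) υ) *
          (((υ*j : ℕ) : ℝ) - (υ:ℝ)*(n:ℝ)) * x ^ (υ*(j+1)) := by
    rw [Finset.mul_sum, ← Finset.sum_sub_distrib, Finset.mul_sum]
    refine Finset.sum_congr rfl fun j _ => ?_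
    rw [show υ*(j+1) = υ*j + υ by ring, pow_add,
      show (-x)^υ = (-1:ℝ)^υ * x^υ by rw [neg_pow]]
    ring
  rw [h2, Finset.sum_range_succ' _ n, Finset.sum_range_succ]
  have hz1 : bcoef p q υ n 0 * poch ((q+1-(υ:ℝ)) + ((υ*0 : ℕ):ℝ)) υ * ((υ*0 : ℕ) : ℝ)
      * x ^ (υ*0) = 0 := by simp
  have hz2 : (-1:ℝ)^υ * (bcoef p q υ n n * poch (((n:ℝ)+1-p) + (υ*n : ℕ)) υ) *
      (((υ*n : ℕ) : ℝ) - (υ:ℝ)*(n:ℝ)) * x ^ (υ*(n+1)) = 0 := by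
    have : (((υ*n : ℕ) : ℝ) - (υ:ℝ)*(n:ℝ)) = 0 := by push_cast; ring
    rw [this]; ring
  rw [hz1, hz2, add_zero, add_zero, sub_eq_zero]
  refine Finset.sum_congr rfl fun j hj => ?_
  have hjn : j < n := Finset.mem_range.mp hj
  linear_combination (x ^ (υ*(j+1))) * coeff_identity p q υ n j hjn
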